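/- Let ρ(s) = −5(1 − 4·2^{−s} − 3·3^{−s} + 12·6^{−s}) − 175(5^{−s} − 4·10^{−s} − 3·15^{−s} + 12·30^{−s}). Then the limit as s → 2 of ρ(s)·ζ(s)·ζ(s−1) exists and equals −(4/3)·π²·log 2, where ζ is the Riemann zeta function. -/
import Mathlib

open Filter Complex Topology

/-- The function ρ(s), as an entire function of a complex variable. -/
noncomputable def rhoC (s : ℂ) : ℂ :=
  -5 * (1 - 4 * (2:ℂ) ^ (-s) - 3 * (3:ℂ) ^ (-s) + 12 * (6:ℂ) ^ (-s))
    - 175 * ((5:ℂ) ^ (-s) - 4 * (10:ℂ) ^ (-s) - 3 * (15:ℂ) ^ (-s) + 12 * (30:ℂ) ^ (-s))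

lemma cpow_neg_two_eval (c : ℂ) (hc : c ≠ 0) : c ^ (-2:ℂ) = (c^2)⁻¹ := by
  rw [show (-2:ℂ) = ((-2:ℤ):ℂ) by norm_num, Complex.cpow_intCast]
  simp [zpow_neg, zpow_two, sq]

lemma base_deriv (c : ℂ) (hc : c ≠ 0) :
    HasDerivAt (fun s : ℂ => c ^ (-s)) (c ^ (-2:ℂ) * Complex.log c * (-1)) 2 :=
  (hasDerivAt_neg (2:ℂ)).const_cpow (Or.inl hc)

lemma logC (x : ℝ) (hx : 0 ≤ x) : Complex.log ((x:ℝ):ℂ) = (Real.log x : ℂ) :=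
  (Complex.ofReal_log hx).symm

lemma log2C : Complex.log 2 = (Real.log 2 : ℂ) := by
  rw [show (2:ℂ) = ((2:ℝ):ℂ) by norm_num, logC] <;> norm_num

lemma log3C : Complex.log 3 = (Real.log 3 : ℂ) := by
  rw [show (3:ℂ) = ((3:ℝ):ℂ) by norm_num, logC] <;> norm_num

lemma log5C : Complex.log 5 = (Real.log 5 : ℂ) := by
  rw [show (5:ℂ) = ((5:ℝ):ℂ) by norm_num, logC] <;> norm_num

lemma log6C : Complex.log 6 = ((Real.log 2 + Real.log 3 : ℝ) : ℂ) := by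
  rw [show (6:ℂ) = ((6:ℝ):ℂ) by norm_num, logC _ (by norm_num),
    show (6:ℝ) = 2*3 by norm_num, Real.log_mul (by norm_num) (by norm_num)]

lemma log10C : Complex.log 10 = ((Real.log 2 + Real.log 5 : ℝ) : ℂ) := by
  rw [show (10:ℂ) = ((10:ℝ):ℂ) by norm_num, logC _ (by norm_num),
    show (10:ℝ) = 2*5 by norm_num, Real.log_mul (by norm_num) (by norm_num)]

lemma log15C : Complex.log 15 = ((Real.log 3 + Real.log 5 : ℝ) : ℂ) := by
  rw [show (15:ℂ) = ((15:ℝ):ℂ) by norm_num, logC _ (by norm_num),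
    show (15:ℝ) = 3*5 by norm_num, Real.log_mul (by norm_num) (by norm_num)]

lemma log30C : Complex.log 30 = ((Real.log 2 + Real.log 3 + Real.log 5 : ℝ) : ℂ) := by
  rw [show (30:ℂ) = ((30:ℝ):ℂ) by norm_num, logC _ (by norm_num),
    show (30:ℝ) = 2*(3*5) by norm_num, Real.log_mul (by norm_num) (by norm_num),
    Real.log_mul (by norm_num) (by norm_num)]
  push_cast; ring

lemma rhoC_two : rhoC 2 = 0 := by
  unfold rhoC
  rw [show (-(2:ℂ)) = (-2:ℂ) by ring]
  rw [cpow_neg_two_eval 2 (by norm_num), cpow_neg_two_eval 3 (by norm_num),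
    cpow_neg_two_eval 5 (by norm_num), cpow_neg_two_eval 6 (by norm_num),
    cpow_neg_two_eval 10 (by norm_num), cpow_neg_two_eval 15 (by norm_num),
    cpow_neg_two_eval 30 (by norm_num)]
  norm_num

lemma rho_deriv : HasDerivAt rhoC (-8 * Complex.log 2) 2 := by
  have h2 := base_deriv 2 (by norm_num)
  have h3 := base_deriv 3 (by norm_num)
  have h5 := base_deriv 5 (by norm_num)
  have h6 := base_deriv 6 (by norm_num)
  have h10 := base_deriv 10 (by norm_num)
  have h15 := base_deriv 15 (by norm_num)
  have h30 := base_deriv 30 (by norm_num)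
  have H := ((((hasDerivAt_const (2:ℂ) (1:ℂ)).sub (h2.const_mul 4)).sub
      (h3.const_mul 3)).add (h6.const_mul 12)).const_mul (-5:ℂ) |>.sub
    ((((h5.sub (h10.const_mul 4)).sub (h15.const_mul 3)).add
      (h30.const_mul 12)).const_mul (175:ℂ))
  have H' : HasDerivAt rhoC
      (-5 * (0 - 4 * ((2:ℂ) ^ (-2:ℂ) * Complex.log 2 * (-1))
          - 3 * ((3:ℂ) ^ (-2:ℂ) * Complex.log 3 * (-1))
          + 12 * ((6:ℂ) ^ (-2:ℂ) * Complex.log 6 * (-1)))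
        - 175 * ((5:ℂ) ^ (-2:ℂ) * Complex.log 5 * (-1)
          - 4 * ((10:ℂ) ^ (-2:ℂ) * Complex.log 10 * (-1))
          - 3 * ((15:ℂ) ^ (-2:ℂ) * Complex.log 15 * (-1))
          + 12 * ((30:ℂ) ^ (-2:ℂ) * Complex.log 30 * (-1)))) 2 := H
  convert H' using 1
  rw [cpow_neg_two_eval 2 (by norm_num), cpow_neg_two_eval 3 (by norm_num),
    cpow_neg_two_eval 5 (by norm_num), cpow_neg_two_eval 6 (by norm_num),
    cpow_neg_two_eval 10 (by norm_num), cpow_neg_two_eval 15 (by norm_num),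
    cpow_neg_two_eval 30 (by norm_num),
    log2C, log3C, log5C, log6C, log10C, log15C, log30C]
  push_cast
  ring

theorem stmt11 :
    Filter.Tendsto (fun s : ℂ => rhoC s * riemannZeta s * riemannZeta (s - 1))
      (nhdsWithin 2 {(2:ℂ)}ᶜ)
      (nhds ((-(4 / 3) * Real.pi ^ 2 * Real.log 2 : ℝ) : ℂ)) := by
  have hslope : Tendsto (slope rhoC 2) (𝓝[≠] 2) (𝓝 (-8 * Complex.log 2)) :=
    hasDerivAt_iff_tendsto_slope.mp rho_deriv
  have hzeta : Tendsto riemannZeta (𝓝[≠] 2) (𝓝 (riemannZeta 2)) :=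
    ((differentiableAt_riemannZeta (by norm_num : (2:ℂ) ≠ 1)).continuousAt.tendsto).mono_left
      nhdsWithin_le_nhds
  have hsub : Tendsto (fun s : ℂ => s - 1) (𝓝[≠] 2) (𝓝[≠] 1) := by
    apply tendsto_nhdsWithin_of_tendsto_nhds_of_eventually_within
    · have h1 : Tendsto (fun s : ℂ => s - 1) (𝓝 2) (𝓝 (2 - 1)) :=
        (continuous_sub_right (1:ℂ)).tendsto 2
      have : (2:ℂ) - 1 = 1 := by norm_num
      rw [this] at h1
      exact h1.mono_left nhdsWithin_le_nhds
    · filter_upwards [self_mem_nhdsWithin] with s hs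
      simp only [Set.mem_compl_iff, Set.mem_singleton_iff] at hs ⊢
      intro h; apply hs; linear_combination h
  have hres : Tendsto (fun s : ℂ => (s - 2) * riemannZeta (s - 1)) (𝓝[≠] 2) (𝓝 1) := by
    have h := riemannZeta_residue_one.comp hsub
    have : (fun s : ℂ => (s - 1 - 1) * riemannZeta (s - 1))
        = fun s : ℂ => (s - 2) * riemannZeta (s - 1) := by
      funext s; ring_nf
    simpa [Function.comp_def, this] using h
  have hprod := (hslope.mul hzeta).mul hres
  have heq : (fun s : ℂ => slope rhoC 2 s * riemannZeta s * ((s - 2) * riemannZeta (s - 1)))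
      =ᶠ[𝓝[≠] 2] (fun s : ℂ => rhoC s * riemannZeta s * riemannZeta (s - 1)) := by
    filter_upwards [self_mem_nhdsWithin] with s hs
    have hs2 : s - 2 ≠ 0 := sub_ne_zero.mpr hs
    rw [slope_def_field, rhoC_two]
    field_simp
    ring
  have hmain := hprod.congr' heq
  convert hmain using 2
  rw [riemannZeta_two, log2C]
  push_cast
  ring
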